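/- Fix ε > 0, H > 0, constants 0 < c_m ≤ c_M, μ₁ > 0 and V > 0. (1) There exists δ > 0 depending only on ε, H, c_m, c_M, μ₁, V — in particular not on the number N of layers nor on the partition — with the following property: for every N ≥ 1, every partition 0 = h₋₁ < h₀ < ⋯ < h_N = H, and every piecewise constant diffusion coefficient c on [0,H] with c ≡ c_{j+1} ∈ [c_m, c_M] on (h_j, h_{j+1}) for j = −1,…,N−1 and total variation Σ_{j=0}^{N−1} |c_{j+1} − c_j| ≤ V, every μ ≥ μ₁ and λ ≥ (c_M + ε) μ², and every normalized reduced eigenfunction u for (c, μ, λ), one has u(y)² + u'(y)² ≥ δ² for all y ∈ [0,H]. (2) Moreover, for every interval (a,b) ⊆ (0,H) there exist d > 0 and λ₀ > 0, depending only on ε, H, c_m, c_M, μ₁, V and b − a, such that ∫_a^b u(y)² c(y)⁻¹ dy ≥ d whenever in addition λ > λ₀. -/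

import Mathlib

open Set MeasureTheory Filter

/-- `u` (with derivative `u'`) is a reduced eigenfunction for `(c, μ, lam)` on `[0,H]`. -/
def ReducedEigenfunction (H : ℝ) (c : ℝ → ℝ) (μ lam : ℝ) (u u' : ℝ → ℝ) : Prop :=
  (∀ y ∈ Set.Icc (0:ℝ) H, HasDerivWithinAt u (u' y) (Set.Icc (0:ℝ) H) y) ∧
  ContinuousOn u' (Set.Icc (0:ℝ) H) ∧
  (∀ y ∈ Set.Icc (0:ℝ) H, u' y = u' 0 - ∫ t in (0:ℝ)..y, (lam / c t - μ ^ 2) * u t) ∧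
  (∃ y ∈ Set.Icc (0:ℝ) H, u y ≠ 0) ∧
  u 0 = 0 ∧ u H = 0

/-- `c` is a piecewise constant diffusion coefficient on `[0,H]` built on the
partition `p 0 = 0 < p 1 < ⋯ < p (N+1) = H` with values `v j ∈ [c_m, c_M]` on the
`N+1` open layers, and with total variation `∑_{j<N} |v (j+1) - v j| ≤ V`. -/
def PiecewiseConstCoeff (H c_m c_M V : ℝ) (N : ℕ) (p v : ℕ → ℝ) (c : ℝ → ℝ) : Prop :=
  1 ≤ N ∧ p 0 = 0 ∧ p (N + 1) = H ∧
  (∀ j ≤ N, p j < p (j + 1)) ∧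
  (∀ j ≤ N, c_m ≤ v j ∧ v j ≤ c_M) ∧
  (∑ j ∈ Finset.range N, |v (j + 1) - v j|) ≤ V ∧
  Measurable c ∧
  (∀ y ∈ Set.Icc (0:ℝ) H, c_m ≤ c y ∧ c y ≤ c_M) ∧
  (∀ j ≤ N, ∀ y ∈ Set.Ioo (p j) (p (j + 1)), c y = v j)

/-! On a layer where `c ≡ w` the equation reads `u'' = -q u` with
`q = λ / w - μ² ≥ ε λ / (c_M (c_M + ε)) > 0`, so the energy `u'² / q + u²` is constant there.
Across an interface `u` and `u'` are continuous and only `q` jumps, which changes the energy by a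
factor at most `exp (K |Δc|)`, `K = c_M (c_M + ε) / (ε c_m²)`. Hence all layer energies agree up to
the factor `exp (K V)`, whatever the number of layers, and the normalisation `∫ u² / c = 1` forces
each of them to be at least `c_m / (H exp (K V))`; this gives (1) because `q ≥ ε μ₁² / c_M`.
For (2) integrate `(u u')' = u'² - (λ / c - μ²) u²` over `(a, b)`: the integrand is at least
`q · energy - 2 λ u² / c` with `q · energy ≳ λ`, while by the energy bound the boundary terms
`u u'` are only `O(√λ)`; so `2 λ ∫_a^b u² / c ≳ λ (b - a)` once `λ` is large. -/

open Topology Real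

section Partition

variable {N : ℕ} {p : ℕ → ℝ} {a b : ℝ}

theorem monotoneOn_Iic_of_lt_succ (hp : ∀ j ≤ N, p j < p (j + 1)) :
    MonotoneOn p (Iic (N + 1)) :=
  (strictMonoOn_Iic_of_lt_succ fun m hm => by simpa using hp m (Nat.lt_succ_iff.mp hm)).monotoneOn

theorem Icc_apply_succ_subset_Icc (hp0 : p 0 = a) (hpN : p (N + 1) = b)
    (hp : ∀ j ≤ N, p j < p (j + 1)) {j : ℕ} (hj : j ≤ N) :
    Icc (p j) (p (j + 1)) ⊆ Icc a b := by
  have hmono := monotoneOn_Iic_of_lt_succ hp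
  rw [← hp0, ← hpN]
  exact Icc_subset_Icc (hmono (by simp) (by simp; omega) (Nat.zero_le j))
    (hmono (by simp; omega) (by simp) (by omega))

theorem exists_mem_Icc_apply_succ (hp0 : p 0 = a) (hpN : p (N + 1) = b)
    {y : ℝ} (hy : y ∈ Icc a b) : ∃ j ≤ N, y ∈ Icc (p j) (p (j + 1)) := by
  classical
  set j := Nat.findGreatest (fun i => p i ≤ y) N
  refine ⟨j, Nat.findGreatest_le N, ?_, ?_⟩
  · exact Nat.findGreatest_spec (P := fun i => p i ≤ y) (Nat.zero_le N) (hp0 ▸ hy.1)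
  · rcases (Nat.findGreatest_le N : j ≤ N).lt_or_eq with hlt | heq
    · exact le_of_not_ge (Nat.findGreatest_is_greatest (Nat.lt_succ_self j) hlt)
    · rw [show j = N from heq, hpN]
      exact hy.2

theorem exists_mem_Ioo_apply_succ (hp0 : p 0 = a) (hpN : p (N + 1) = b)
    {y : ℝ} (hy : y ∈ Icc a b) (hyp : y ∉ range p) : ∃ j ≤ N, y ∈ Ioo (p j) (p (j + 1)) := by
  obtain ⟨j, hj, hyj⟩ := exists_mem_Icc_apply_succ hp0 hpN hy
  refine ⟨j, hj, hyj.1.lt_of_ne ?_, hyj.2.lt_of_ne ?_⟩ <;>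
    rintro rfl <;> exact hyp (mem_range_self _)

end Partition

theorem intervalIntegrable_inv_of_le {a b c_m : ℝ} {c : ℝ → ℝ} (hab : a ≤ b) (hc : Measurable c)
    (hcm : 0 < c_m) (hle : ∀ y ∈ Icc a b, c_m ≤ c y) :
    IntervalIntegrable (fun y => (c y)⁻¹) volume a b := by
  rw [intervalIntegrable_iff_integrableOn_Ioc_of_le hab]
  refine IntegrableOn.of_bound measure_Ioc_lt_top hc.inv.aestronglyMeasurable c_m⁻¹ ?_
  rw [ae_restrict_iff' measurableSet_Ioc]
  filter_upwards with y hy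
  have hy := hle y (Ioc_subset_Icc_self hy)
  rw [norm_inv, Real.norm_of_nonneg (hcm.trans_le hy).le]
  exact inv_anti₀ hcm hy

section EnergyChain

variable {F s : ℕ → ℝ} {N : ℕ}

theorem le_mul_exp_sum_Ico
    (hF : ∀ k < N, F (k + 1) ≤ F k * exp (s k) ∧ F k ≤ F (k + 1) * exp (s k))
    {i j : ℕ} (hij : i ≤ j) (hj : j ≤ N) :
    F j ≤ F i * exp (∑ k ∈ Finset.Ico i j, s k) ∧
      F i ≤ F j * exp (∑ k ∈ Finset.Ico i j, s k) := by
  induction j, hij using Nat.le_induction with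
  | base => simp
  | succ j hij ih =>
    obtain ⟨ih₁, ih₂⟩ := ih (by omega)
    obtain ⟨h₁, h₂⟩ := hF j (by omega)
    rw [Finset.sum_Ico_succ_top hij, exp_add]
    constructor
    · calc F (j + 1) ≤ F j * exp (s j) := h₁
        _ ≤ F i * exp (∑ k ∈ Finset.Ico i j, s k) * exp (s j) := by gcongr
        _ = _ := by ring
    · calc F i ≤ F j * exp (∑ k ∈ Finset.Ico i j, s k) := ih₂
        _ ≤ F (j + 1) * exp (s j) * exp (∑ k ∈ Finset.Ico i j, s k) := by gcongr
        _ = _ := by ring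

theorem le_mul_exp_of_forall_lt_succ {S : ℝ} (hF₀ : ∀ i ≤ N, 0 ≤ F i) (hs : ∀ k, 0 ≤ s k)
    (hS : ∑ k ∈ Finset.range N, s k ≤ S)
    (hF : ∀ k < N, F (k + 1) ≤ F k * exp (s k) ∧ F k ≤ F (k + 1) * exp (s k))
    {i j : ℕ} (hi : i ≤ N) (hj : j ≤ N) : F j ≤ F i * exp S := by
  have hsum {m n : ℕ} (hn : n ≤ N) : ∑ k ∈ Finset.Ico m n, s k ≤ S :=
    (Finset.sum_le_sum_of_subset_of_nonneg
      (fun k hk => Finset.mem_range.2 ((Finset.mem_Ico.1 hk).2.trans_le hn))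
      fun k _ _ => hs k).trans hS
  rcases le_total i j with hij | hji
  · exact (le_mul_exp_sum_Ico hF hij hj).1.trans
      (mul_le_mul_of_nonneg_left (exp_le_exp.2 (hsum hj)) (hF₀ i hi))
  · exact (le_mul_exp_sum_Ico hF hji hi).2.trans
      (mul_le_mul_of_nonneg_left (exp_le_exp.2 (hsum hi)) (hF₀ i hi))

end EnergyChain

theorem add_div_le_mul_exp {A B q q' : ℝ} (hA : 0 ≤ A) (hB : 0 ≤ B) (hq : 0 < q)
    (hq' : 0 < q') : A / q' + B ≤ (A / q + B) * exp (|q - q'| / q') := by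
  have hratio : q / q' ≤ exp (|q - q'| / q') :=
    calc q / q' = (q - q') / q' + 1 := by field_simp; ring
      _ ≤ |q - q'| / q' + 1 := by gcongr; exact le_abs_self _
      _ ≤ _ := add_one_le_exp _
  calc A / q' + B = A / q * (q / q') + B := by field_simp
    _ ≤ A / q * exp (|q - q'| / q') + B * exp (|q - q'| / q') := by
        gcongr
        exact le_mul_of_one_le_right hB (one_le_exp (by positivity))
    _ = (A / q + B) * exp (|q - q'| / q') := by ring

section DivSubSq

variable {ε c_m c_M lam μ w w' : ℝ}

theorem mul_le_div_sub_sq (hε : 0 < ε) (hw : 0 < w) (hwM : w ≤ c_M)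
    (hlam : (c_M + ε) * μ ^ 2 ≤ lam) :
    ε / (c_M * (c_M + ε)) * lam ≤ lam / w - μ ^ 2 := by
  have hcM : 0 < c_M := hw.trans_le hwM
  have hlam₀ : 0 ≤ lam := le_trans (by positivity) hlam
  have hμ : μ ^ 2 ≤ lam / (c_M + ε) := by rw [le_div_iff₀ (by positivity)]; linarith
  calc ε / (c_M * (c_M + ε)) * lam = lam / c_M - lam / (c_M + ε) := by field_simp; ring
    _ ≤ lam / w - μ ^ 2 := by gcongr

theorem div_sub_sq_le (hcm : 0 < c_m) (hw : c_m ≤ w) (hlam : 0 ≤ lam) :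
    lam / w - μ ^ 2 ≤ lam / c_m := by
  have : lam / w ≤ lam / c_m := by gcongr
  nlinarith [sq_nonneg μ]

theorem abs_div_sub_div_le (hcm : 0 < c_m) (hw : c_m ≤ w) (hw' : c_m ≤ w') (hlam : 0 ≤ lam) :
    |lam / w - lam / w'| ≤ lam * |w' - w| / c_m ^ 2 := by
  have hw₀ : 0 < w := hcm.trans_le hw
  have hw₀' : 0 < w' := hcm.trans_le hw'
  rw [div_sub_div _ _ hw₀.ne' hw₀'.ne', abs_div, abs_of_pos (mul_pos hw₀ hw₀'),
    show lam * w' - w * lam = lam * (w' - w) by ring, abs_mul, abs_of_nonneg hlam, sq]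
  gcongr

end DivSubSq

noncomputable def layerEnergy (lam μ w : ℝ) (u u' : ℝ → ℝ) (y : ℝ) : ℝ :=
  u' y ^ 2 / (lam / w - μ ^ 2) + u y ^ 2

section LayerEnergy

variable {lam μ w y m : ℝ} {u u' : ℝ → ℝ}

theorem layerEnergy_nonneg (hq : 0 < lam / w - μ ^ 2) : 0 ≤ layerEnergy lam μ w u u' y := by
  unfold layerEnergy
  positivity

theorem layerEnergy_le_mul_exp_abs_sub {ε c_m c_M w' : ℝ} (hε : 0 < ε) (hcm : 0 < c_m)
    (hlam₀ : 0 < lam) (hlam : (c_M + ε) * μ ^ 2 ≤ lam)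
    (hw : w ∈ Icc c_m c_M) (hw' : w' ∈ Icc c_m c_M) :
    layerEnergy lam μ w' u u' y ≤
      layerEnergy lam μ w u u' y * exp (c_M * (c_M + ε) / (ε * c_m ^ 2) * |w' - w|) := by
  have hcM : 0 < c_M := hcm.trans_le (hw.1.trans hw.2)
  have hκ : 0 < ε / (c_M * (c_M + ε)) * lam := by positivity
  have hq := hκ.trans_le (mul_le_div_sub_sq hε (hcm.trans_le hw.1) hw.2 hlam)
  have hq' := mul_le_div_sub_sq hε (hcm.trans_le hw'.1) hw'.2 hlam
  refine (add_div_le_mul_exp (sq_nonneg _) (sq_nonneg _) hq (hκ.trans_le hq')).trans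
    (mul_le_mul_of_nonneg_left (exp_le_exp.2 ?_) (layerEnergy_nonneg hq))
  rw [sub_sub_sub_cancel_right, div_le_iff₀ (hκ.trans_le hq')]
  calc |lam / w - lam / w'| ≤ lam * |w' - w| / c_m ^ 2 :=
        abs_div_sub_div_le hcm hw.1 hw'.1 hlam₀.le
    _ = c_M * (c_M + ε) / (ε * c_m ^ 2) * |w' - w| * (ε / (c_M * (c_M + ε)) * lam) := by
        field_simp
    _ ≤ _ := by gcongr

theorem mul_layerEnergy_le_sq_add_sq (hm : 0 < m) (hm₁ : m ≤ 1) (hmq : m ≤ lam / w - μ ^ 2) :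
    m * layerEnergy lam μ w u u' y ≤ u y ^ 2 + u' y ^ 2 := by
  have hq : 0 < lam / w - μ ^ 2 := hm.trans_le hmq
  have hmq' : m / (lam / w - μ ^ 2) ≤ 1 := (div_le_one hq).2 hmq
  calc m * layerEnergy lam μ w u u' y = m / (lam / w - μ ^ 2) * u' y ^ 2 + m * u y ^ 2 := by
        unfold layerEnergy; ring
    _ ≤ 1 * u' y ^ 2 + 1 * u y ^ 2 := by gcongr
    _ = u y ^ 2 + u' y ^ 2 := by ring

theorem two_mul_abs_mul_le_sqrt_mul_layerEnergy (hq : 0 < lam / w - μ ^ 2) :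
    2 * |u y * u' y| ≤ √(lam / w - μ ^ 2) * layerEnergy lam μ w u u' y := by
  set s := √(lam / w - μ ^ 2)
  have hs : 0 < s := sqrt_pos.2 hq
  have hss : lam / w - μ ^ 2 = s ^ 2 := (sq_sqrt hq.le).symm
  have key : s * layerEnergy lam μ w u u' y =
      (|u' y| - s * |u y|) ^ 2 / s + 2 * |u y * u' y| := by
    rw [layerEnergy, hss, abs_mul, ← sq_abs (u y), ← sq_abs (u' y)]
    field_simp
    ring
  rw [key]
  linarith [div_nonneg (sq_nonneg (|u' y| - s * |u y|)) hs.le]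

theorem mul_layerEnergy_sub_le (hq : 0 < lam / w - μ ^ 2) :
    (lam / w - μ ^ 2) * layerEnergy lam μ w u u' y - 2 * lam * (u y ^ 2 / w) ≤
      u' y ^ 2 - (lam / w - μ ^ 2) * u y ^ 2 := by
  have h : (lam / w - μ ^ 2) * layerEnergy lam μ w u u' y =
      u' y ^ 2 + (lam / w - μ ^ 2) * u y ^ 2 := by
    unfold layerEnergy
    field_simp
  have h' : 2 * lam * (u y ^ 2 / w) = 2 * (lam / w) * u y ^ 2 := by ring
  rw [h, h']
  nlinarith [mul_nonneg (sq_nonneg μ) (sq_nonneg (u y))]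

end LayerEnergy

namespace ReducedEigenfunction

variable {H lam μ : ℝ} {c u u' : ℝ → ℝ}

theorem continuousOn (hE : ReducedEigenfunction H c μ lam u u') : ContinuousOn u (Icc 0 H) :=
  fun y hy => (hE.1 y hy).continuousWithinAt

theorem continuousOn_deriv (hE : ReducedEigenfunction H c μ lam u u') :
    ContinuousOn u' (Icc 0 H) :=
  hE.2.1

theorem hasDerivAt (hE : ReducedEigenfunction H c μ lam u u') {y : ℝ} (hy : Icc 0 H ∈ 𝓝 y) :
    HasDerivAt u (u' y) y :=
  (hE.1 y (mem_of_mem_nhds hy)).hasDerivAt hy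

theorem hasDerivAt_deriv (hE : ReducedEigenfunction H c μ lam u u')
    (hint : IntervalIntegrable (fun t => lam / c t - μ ^ 2) volume 0 H)
    {s : Set ℝ} (hs : IsOpen s) (hsH : s ⊆ Icc 0 H) (hc : ContinuousOn c s)
    (hc₀ : ∀ t ∈ s, c t ≠ 0) {y : ℝ} (hy : y ∈ s) :
    HasDerivAt u' (-((lam / c y - μ ^ 2) * u y)) y := by
  have hf : ContinuousOn (fun t => (lam / c t - μ ^ 2) * u t) s :=
    ((continuousOn_const.div hc hc₀).sub continuousOn_const).mul (hE.continuousOn.mono hsH)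
  obtain ⟨hy₀, hyH⟩ := hsH hy
  have hint_y : IntervalIntegrable (fun t => (lam / c t - μ ^ 2) * u t) volume 0 y := by
    refine (hint.mul_continuousOn ?_).mono_set ?_
    · rw [uIcc_of_le (hy₀.trans hyH)]
      exact hE.continuousOn
    · rw [uIcc_of_le hy₀, uIcc_of_le (hy₀.trans hyH)]
      exact Icc_subset_Icc_right hyH
  exact ((intervalIntegral.integral_hasDerivAt_right hint_y
    (hf.stronglyMeasurableAtFilter hs y hy) (hf.continuousAt (hs.mem_nhds hy))).const_sub
    (u' 0)).congr_of_eventuallyEq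
    (eventually_of_mem (mem_of_superset (hs.mem_nhds hy) hsH) hE.2.2.1)

theorem layerEnergy_eq (hE : ReducedEigenfunction H c μ lam u u')
    (hint : IntervalIntegrable (fun t => lam / c t - μ ^ 2) volume 0 H)
    {α β w : ℝ} (hsub : Icc α β ⊆ Icc 0 H) (hc : ∀ y ∈ Ioo α β, c y = w) (hw : w ≠ 0)
    (hq : lam / w - μ ^ 2 ≠ 0) {y : ℝ} (hy : y ∈ Icc α β) :
    layerEnergy lam μ w u u' y = layerEnergy lam μ w u u' α := by
  have hder : ∀ t ∈ Ioo α β, HasDerivAt (layerEnergy lam μ w u u') 0 t := by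
    intro t ht
    have hu'' := hE.hasDerivAt_deriv hint isOpen_Ioo (Ioo_subset_Icc_self.trans hsub)
      (continuousOn_const.congr hc) (fun s hs => hc s hs ▸ hw) ht
    rw [hc t ht] at hu''
    have hu' := hE.hasDerivAt (mem_of_superset (isOpen_Ioo.mem_nhds ht)
      (Ioo_subset_Icc_self.trans hsub))
    refine (((hu''.fun_pow 2).div_const (lam / w - μ ^ 2)).add (hu'.fun_pow 2)).congr_deriv ?_
    generalize lam / w - μ ^ 2 = q at hq ⊢
    field_simp
    ring
  have hcont : ContinuousOn (layerEnergy lam μ w u u') (Icc α β) :=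
    (((hE.continuousOn_deriv.mono hsub).pow 2).div_const _).add ((hE.continuousOn.mono hsub).pow 2)
  have h := integral_eq_of_hasDerivAt_off_countable_of_le _ (fun _ => (0 : ℝ)) hy.1
    countable_empty (hcont.mono (Icc_subset_Icc_right hy.2))
    (fun t ht => hder t ⟨ht.1.1, ht.1.2.trans_le hy.2⟩) intervalIntegrable_const
  rw [intervalIntegral.integral_zero] at h
  linarith

end ReducedEigenfunction

namespace PiecewiseConstCoeff

variable {H c_m c_M V ε μ lam : ℝ} {N : ℕ} {p v : ℕ → ℝ} {c u u' : ℝ → ℝ}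

theorem lt_succ (hPC : PiecewiseConstCoeff H c_m c_M V N p v c) {j : ℕ} (hj : j ≤ N) :
    p j < p (j + 1) :=
  hPC.2.2.2.1 j hj

theorem value_mem_Icc (hPC : PiecewiseConstCoeff H c_m c_M V N p v c) {j : ℕ} (hj : j ≤ N) :
    v j ∈ Icc c_m c_M :=
  hPC.2.2.2.2.1 j hj

theorem variation_le (hPC : PiecewiseConstCoeff H c_m c_M V N p v c) :
    ∑ j ∈ Finset.range N, |v (j + 1) - v j| ≤ V :=
  hPC.2.2.2.2.2.1

theorem measurable (hPC : PiecewiseConstCoeff H c_m c_M V N p v c) : Measurable c :=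
  hPC.2.2.2.2.2.2.1

theorem apply_mem_Icc (hPC : PiecewiseConstCoeff H c_m c_M V N p v c) {y : ℝ}
    (hy : y ∈ Icc 0 H) : c y ∈ Icc c_m c_M :=
  hPC.2.2.2.2.2.2.2.1 y hy

theorem apply_eq_of_mem_Ioo (hPC : PiecewiseConstCoeff H c_m c_M V N p v c) {j : ℕ}
    (hj : j ≤ N) {y : ℝ} (hy : y ∈ Ioo (p j) (p (j + 1))) : c y = v j :=
  hPC.2.2.2.2.2.2.2.2 j hj y hy

theorem Icc_subset (hPC : PiecewiseConstCoeff H c_m c_M V N p v c) {j : ℕ} (hj : j ≤ N) :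
    Icc (p j) (p (j + 1)) ⊆ Icc 0 H :=
  Icc_apply_succ_subset_Icc hPC.2.1 hPC.2.2.1 hPC.2.2.2.1 hj

theorem exists_mem_Icc (hPC : PiecewiseConstCoeff H c_m c_M V N p v c) {y : ℝ}
    (hy : y ∈ Icc 0 H) : ∃ j ≤ N, y ∈ Icc (p j) (p (j + 1)) :=
  exists_mem_Icc_apply_succ hPC.2.1 hPC.2.2.1 hy

theorem exists_mem_Ioo (hPC : PiecewiseConstCoeff H c_m c_M V N p v c) {y : ℝ}
    (hy : y ∈ Icc 0 H) (hyp : y ∉ range p) : ∃ j ≤ N, y ∈ Ioo (p j) (p (j + 1)) :=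
  exists_mem_Ioo_apply_succ hPC.2.1 hPC.2.2.1 hy hyp

theorem nonneg (hPC : PiecewiseConstCoeff H c_m c_M V N p v c) : 0 ≤ H := by
  have h := hPC.Icc_subset (Nat.zero_le N) ⟨le_rfl, (hPC.lt_succ (Nat.zero_le N)).le⟩
  exact h.1.trans h.2

theorem intervalIntegrable_inv (hPC : PiecewiseConstCoeff H c_m c_M V N p v c)
    (hcm : 0 < c_m) : IntervalIntegrable (fun y => (c y)⁻¹) volume 0 H :=
  intervalIntegrable_inv_of_le hPC.nonneg hPC.measurable hcm fun _ hy => (hPC.apply_mem_Icc hy).1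

theorem intervalIntegrable_div_sub_sq (hPC : PiecewiseConstCoeff H c_m c_M V N p v c)
    (hcm : 0 < c_m) : IntervalIntegrable (fun y => lam / c y - μ ^ 2) volume 0 H :=
  ((hPC.intervalIntegrable_inv hcm).const_mul lam).sub intervalIntegrable_const

theorem intervalIntegrable_sq_div (hPC : PiecewiseConstCoeff H c_m c_M V N p v c)
    (hcm : 0 < c_m) (hE : ReducedEigenfunction H c μ lam u u') :
    IntervalIntegrable (fun y => u y ^ 2 / c y) volume 0 H := by
  refine (hPC.intervalIntegrable_inv hcm).continuousOn_mul ?_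
  rw [uIcc_of_le hPC.nonneg]
  exact hE.continuousOn.pow 2

theorem intervalIntegrable_sq_sub (hPC : PiecewiseConstCoeff H c_m c_M V N p v c)
    (hcm : 0 < c_m) (hE : ReducedEigenfunction H c μ lam u u') :
    IntervalIntegrable (fun y => u' y ^ 2 - (lam / c y - μ ^ 2) * u y ^ 2) volume 0 H := by
  refine ((hE.continuousOn_deriv.pow 2).intervalIntegrable_of_Icc hPC.nonneg).sub
    ((hPC.intervalIntegrable_div_sub_sq hcm).mul_continuousOn ?_)
  rw [uIcc_of_le hPC.nonneg]
  exact hE.continuousOn.pow 2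

theorem div_sub_sq_pos (hPC : PiecewiseConstCoeff H c_m c_M V N p v c) (hε : 0 < ε)
    (hcm : 0 < c_m) (hlam₀ : 0 < lam) (hlam : (c_M + ε) * μ ^ 2 ≤ lam) {j : ℕ} (hj : j ≤ N) :
    0 < lam / v j - μ ^ 2 := by
  obtain ⟨hv, hvM⟩ := hPC.value_mem_Icc hj
  have hcM : 0 < c_M := hcm.trans_le (hv.trans hvM)
  exact lt_of_lt_of_le (by positivity) (mul_le_div_sub_sq hε (hcm.trans_le hv) hvM hlam)

theorem layerEnergy_eq (hPC : PiecewiseConstCoeff H c_m c_M V N p v c) (hε : 0 < ε)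
    (hcm : 0 < c_m) (hlam₀ : 0 < lam) (hlam : (c_M + ε) * μ ^ 2 ≤ lam)
    (hE : ReducedEigenfunction H c μ lam u u') {j : ℕ} (hj : j ≤ N) {y : ℝ}
    (hy : y ∈ Icc (p j) (p (j + 1))) :
    layerEnergy lam μ (v j) u u' y = layerEnergy lam μ (v j) u u' (p j) :=
  hE.layerEnergy_eq (hPC.intervalIntegrable_div_sub_sq hcm) (hPC.Icc_subset hj)
    (fun _ => hPC.apply_eq_of_mem_Ioo hj) (hcm.trans_le (hPC.value_mem_Icc hj).1).ne'
    (hPC.div_sub_sq_pos hε hcm hlam₀ hlam hj).ne' hy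

theorem layerEnergy_le_mul_exp (hPC : PiecewiseConstCoeff H c_m c_M V N p v c) (hε : 0 < ε)
    (hcm : 0 < c_m) (hlam₀ : 0 < lam) (hlam : (c_M + ε) * μ ^ 2 ≤ lam)
    (hE : ReducedEigenfunction H c μ lam u u') {i j : ℕ} (hi : i ≤ N) (hj : j ≤ N) :
    layerEnergy lam μ (v j) u u' (p j) ≤
      layerEnergy lam μ (v i) u u' (p i) * exp (c_M * (c_M + ε) / (ε * c_m ^ 2) * V) := by
  have hcM : 0 < c_M := hcm.trans_le ((hPC.value_mem_Icc hi).1.trans (hPC.value_mem_Icc hi).2)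
  refine le_mul_exp_of_forall_lt_succ
    (fun i hi => layerEnergy_nonneg (hPC.div_sub_sq_pos hε hcm hlam₀ hlam hi))
    (s := fun k => c_M * (c_M + ε) / (ε * c_m ^ 2) * |v (k + 1) - v k|) (fun k => by positivity)
    (by rw [← Finset.mul_sum]; exact mul_le_mul_of_nonneg_left hPC.variation_le (by positivity))
    (fun k hk => ?_) hi hj
  have hk₁ : k + 1 ≤ N := hk
  rw [← hPC.layerEnergy_eq hε hcm hlam₀ hlam hE hk.le ⟨(hPC.lt_succ hk.le).le, le_rfl⟩]
  refine ⟨layerEnergy_le_mul_exp_abs_sub hε hcm hlam₀ hlam (hPC.value_mem_Icc hk.le)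
    (hPC.value_mem_Icc hk₁), ?_⟩
  rw [abs_sub_comm]
  exact layerEnergy_le_mul_exp_abs_sub hε hcm hlam₀ hlam (hPC.value_mem_Icc hk₁)
    (hPC.value_mem_Icc hk.le)

theorem le_layerEnergy (hPC : PiecewiseConstCoeff H c_m c_M V N p v c) (hε : 0 < ε)
    (hcm : 0 < c_m) (hlam₀ : 0 < lam) (hlam : (c_M + ε) * μ ^ 2 ≤ lam)
    (hE : ReducedEigenfunction H c μ lam u u') (hnorm : ∫ y in (0:ℝ)..H, u y ^ 2 / c y = 1)
    {j : ℕ} (hj : j ≤ N) :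
    c_m / (H * exp (c_M * (c_M + ε) / (ε * c_m ^ 2) * V)) ≤
      layerEnergy lam μ (v j) u u' (p j) := by
  set E := exp (c_M * (c_M + ε) / (ε * c_m ^ 2) * V)
  set F := layerEnergy lam μ (v j) u u' (p j)
  have hbound : ∀ y ∈ Icc 0 H, u y ^ 2 / c y ≤ F * E / c_m := by
    intro y hy
    obtain ⟨i, hi, hyi⟩ := hPC.exists_mem_Icc hy
    have hu : u y ^ 2 ≤ layerEnergy lam μ (v i) u u' y :=
      le_add_of_nonneg_left (div_nonneg (sq_nonneg _)
        (hPC.div_sub_sq_pos hε hcm hlam₀ hlam hi).le)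
    rw [hPC.layerEnergy_eq hε hcm hlam₀ hlam hE hi hyi] at hu
    calc u y ^ 2 / c y ≤ u y ^ 2 / c_m := by gcongr; exact (hPC.apply_mem_Icc hy).1
      _ ≤ F * E / c_m := by
          gcongr
          exact hu.trans (hPC.layerEnergy_le_mul_exp hε hcm hlam₀ hlam hE hj hi)
  have h := intervalIntegral.integral_mono_on hPC.nonneg (hPC.intervalIntegrable_sq_div hcm hE)
    intervalIntegrable_const hbound
  rw [hnorm, intervalIntegral.integral_const, smul_eq_mul, sub_zero, mul_div_assoc',
    le_div_iff₀ hcm, one_mul] at h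
  exact div_le_of_le_mul₀ (mul_nonneg hPC.nonneg (exp_pos _).le)
    (layerEnergy_nonneg (hPC.div_sub_sq_pos hε hcm hlam₀ hlam hj)) (by linarith)

theorem le_sq_add_sq (hPC : PiecewiseConstCoeff H c_m c_M V N p v c) (hε : 0 < ε)
    (hcm : 0 < c_m) {μ₁ : ℝ} (hμ₁ : 0 < μ₁) (hμ : μ₁ ≤ μ) (hlam : (c_M + ε) * μ ^ 2 ≤ lam)
    (hE : ReducedEigenfunction H c μ lam u u') (hnorm : ∫ y in (0:ℝ)..H, u y ^ 2 / c y = 1)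
    {y : ℝ} (hy : y ∈ Icc 0 H) :
    min 1 (ε * μ₁ ^ 2 / c_M) * (c_m / (H * exp (c_M * (c_M + ε) / (ε * c_m ^ 2) * V))) ≤
      u y ^ 2 + u' y ^ 2 := by
  obtain ⟨j, hj, hyj⟩ := hPC.exists_mem_Icc hy
  obtain ⟨hv, hvM⟩ := hPC.value_mem_Icc hj
  have hcM : 0 < c_M := hcm.trans_le (hv.trans hvM)
  have hμ₀ : 0 < μ := hμ₁.trans_le hμ
  have hlam₀ : 0 < lam := lt_of_lt_of_le (by positivity) hlam
  have hm : ε * μ₁ ^ 2 / c_M ≤ lam / v j - μ ^ 2 :=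
    calc ε * μ₁ ^ 2 / c_M ≤ ε / (c_M * (c_M + ε)) * ((c_M + ε) * μ ^ 2) := by
          field_simp
          gcongr
      _ ≤ ε / (c_M * (c_M + ε)) * lam := by gcongr
      _ ≤ lam / v j - μ ^ 2 := mul_le_div_sub_sq hε (hcm.trans_le hv) hvM hlam
  calc _ ≤ min 1 (ε * μ₁ ^ 2 / c_M) * layerEnergy lam μ (v j) u u' (p j) :=
        mul_le_mul_of_nonneg_left (hPC.le_layerEnergy hε hcm hlam₀ hlam hE hnorm hj)
          (by positivity)
    _ = min 1 (ε * μ₁ ^ 2 / c_M) * layerEnergy lam μ (v j) u u' y := by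
        rw [hPC.layerEnergy_eq hε hcm hlam₀ hlam hE hj hyj]
    _ ≤ u y ^ 2 + u' y ^ 2 :=
        mul_layerEnergy_le_sq_add_sq (by positivity) (min_le_left _ _)
          ((min_le_right _ _).trans hm)

theorem integral_sq_sub_eq (hPC : PiecewiseConstCoeff H c_m c_M V N p v c) (hcm : 0 < c_m)
    (hE : ReducedEigenfunction H c μ lam u u') {a b : ℝ} (ha : 0 ≤ a) (hab : a ≤ b)
    (hb : b ≤ H) :
    ∫ y in a..b, (u' y ^ 2 - (lam / c y - μ ^ 2) * u y ^ 2) = u b * u' b - u a * u' a := by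
  have hsub : Icc a b ⊆ Icc 0 H := Icc_subset_Icc ha hb
  have hsub' : uIcc a b ⊆ uIcc 0 H := by
    rw [uIcc_of_le hab, uIcc_of_le hPC.nonneg]
    exact hsub
  refine integral_eq_of_hasDerivAt_off_countable_of_le (fun y => u y * u' y) _ hab
    (countable_range p) ((hE.continuousOn.mono hsub).mul (hE.continuousOn_deriv.mono hsub))
    (fun y hy => ?_) ((hPC.intervalIntegrable_sq_sub hcm hE).mono_set hsub')
  obtain ⟨j, hj, hyj⟩ := hPC.exists_mem_Ioo (hsub (Ioo_subset_Icc_self hy.1)) hy.2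
  have hlayer : Ioo (p j) (p (j + 1)) ⊆ Icc 0 H := Ioo_subset_Icc_self.trans (hPC.Icc_subset hj)
  have hu'' := hE.hasDerivAt_deriv (hPC.intervalIntegrable_div_sub_sq hcm) isOpen_Ioo hlayer
    (continuousOn_const.congr fun _ => hPC.apply_eq_of_mem_Ioo hj)
    (fun t ht => (hcm.trans_le (hPC.apply_mem_Icc (hlayer ht)).1).ne') hyj
  have hu' := hE.hasDerivAt (mem_of_superset (isOpen_Ioo.mem_nhds hyj) hlayer)
  exact (hu'.mul hu'').congr_deriv (by ring)

theorem sub_le_sq_sub_mul_sq (hPC : PiecewiseConstCoeff H c_m c_M V N p v c) (hε : 0 < ε)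
    (hcm : 0 < c_m) (hlam₀ : 0 < lam) (hlam : (c_M + ε) * μ ^ 2 ≤ lam)
    (hE : ReducedEigenfunction H c μ lam u u') {y : ℝ} (hy : y ∈ Icc 0 H) (hyp : y ∉ range p) :
    ε / (c_M * (c_M + ε)) * lam *
        (layerEnergy lam μ (v 0) u u' (p 0) / exp (c_M * (c_M + ε) / (ε * c_m ^ 2) * V)) -
      2 * lam * (u y ^ 2 / c y) ≤ u' y ^ 2 - (lam / c y - μ ^ 2) * u y ^ 2 := by
  obtain ⟨j, hj, hyj⟩ := hPC.exists_mem_Ioo hy hyp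
  obtain ⟨hv, hvM⟩ := hPC.value_mem_Icc hj
  have hq := hPC.div_sub_sq_pos hε hcm hlam₀ hlam hj
  rw [hPC.apply_eq_of_mem_Ioo hj hyj]
  refine le_trans (sub_le_sub_right ?_ _) (mul_layerEnergy_sub_le hq)
  rw [hPC.layerEnergy_eq hε hcm hlam₀ hlam hE hj (Ioo_subset_Icc_self hyj)]
  exact mul_le_mul (mul_le_div_sub_sq hε (hcm.trans_le hv) hvM hlam)
    (div_le_of_le_mul₀ (exp_pos _).le (layerEnergy_nonneg hq)
      (hPC.layerEnergy_le_mul_exp hε hcm hlam₀ hlam hE hj (Nat.zero_le N)))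
    (div_nonneg (layerEnergy_nonneg (hPC.div_sub_sq_pos hε hcm hlam₀ hlam (Nat.zero_le N)))
      (exp_pos _).le) hq.le

theorem two_mul_abs_mul_le (hPC : PiecewiseConstCoeff H c_m c_M V N p v c) (hε : 0 < ε)
    (hcm : 0 < c_m) (hlam₀ : 0 < lam) (hlam : (c_M + ε) * μ ^ 2 ≤ lam)
    (hE : ReducedEigenfunction H c μ lam u u') {y : ℝ} (hy : y ∈ Icc 0 H) :
    2 * |u y * u' y| ≤ √(lam / c_m) *
      (layerEnergy lam μ (v 0) u u' (p 0) * exp (c_M * (c_M + ε) / (ε * c_m ^ 2) * V)) := by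
  obtain ⟨j, hj, hyj⟩ := hPC.exists_mem_Icc hy
  have hq := hPC.div_sub_sq_pos hε hcm hlam₀ hlam hj
  calc 2 * |u y * u' y| ≤ √(lam / v j - μ ^ 2) * layerEnergy lam μ (v j) u u' y :=
        two_mul_abs_mul_le_sqrt_mul_layerEnergy hq
    _ = √(lam / v j - μ ^ 2) * layerEnergy lam μ (v j) u u' (p j) := by
        rw [hPC.layerEnergy_eq hε hcm hlam₀ hlam hE hj hyj]
    _ ≤ _ := by
        gcongr
        · exact layerEnergy_nonneg hq
        · exact div_sub_sq_le hcm (hPC.value_mem_Icc hj).1 hlam₀.le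
        · exact hPC.layerEnergy_le_mul_exp hε hcm hlam₀ hlam hE (Nat.zero_le N) hj

theorem sub_mul_integral_sq_div_le (hPC : PiecewiseConstCoeff H c_m c_M V N p v c)
    (hε : 0 < ε) (hcm : 0 < c_m) (hlam₀ : 0 < lam) (hlam : (c_M + ε) * μ ^ 2 ≤ lam)
    (hE : ReducedEigenfunction H c μ lam u u') {a b : ℝ} (ha : 0 ≤ a) (hab : a ≤ b)
    (hb : b ≤ H) :
    ε / (c_M * (c_M + ε)) * lam *
        (layerEnergy lam μ (v 0) u u' (p 0) / exp (c_M * (c_M + ε) / (ε * c_m ^ 2) * V)) *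
        (b - a) - 2 * lam * ∫ y in a..b, u y ^ 2 / c y ≤
      √(lam / c_m) *
        (layerEnergy lam μ (v 0) u u' (p 0) * exp (c_M * (c_M + ε) / (ε * c_m ^ 2) * V)) := by
  set L := ε / (c_M * (c_M + ε)) * lam *
    (layerEnergy lam μ (v 0) u u' (p 0) / exp (c_M * (c_M + ε) / (ε * c_m ^ 2) * V))
  have hsub : Icc a b ⊆ Icc 0 H := Icc_subset_Icc ha hb
  have hsub' : uIcc a b ⊆ uIcc 0 H := by
    rw [uIcc_of_le hab, uIcc_of_le hPC.nonneg]
    exact hsub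
  have hint := (hPC.intervalIntegrable_sq_div hcm hE).mono_set hsub'
  have hae : ∀ᵐ y ∂volume.restrict (Icc a b),
      L - 2 * lam * (u y ^ 2 / c y) ≤ u' y ^ 2 - (lam / c y - μ ^ 2) * u y ^ 2 := by
    filter_upwards [ae_restrict_of_ae ((countable_range p).ae_notMem volume),
      ae_restrict_mem measurableSet_Icc] with y hyp hy
    exact hPC.sub_le_sq_sub_mul_sq hε hcm hlam₀ hlam hE (hsub hy) hyp
  have ha' := hPC.two_mul_abs_mul_le hε hcm hlam₀ hlam hE (hsub ⟨le_rfl, hab⟩)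
  have hb' := hPC.two_mul_abs_mul_le hε hcm hlam₀ hlam hE (hsub ⟨hab, le_rfl⟩)
  calc L * (b - a) - 2 * lam * ∫ y in a..b, u y ^ 2 / c y
      = ∫ y in a..b, (L - 2 * lam * (u y ^ 2 / c y)) := by
        rw [intervalIntegral.integral_sub intervalIntegrable_const (hint.const_mul _),
          intervalIntegral.integral_const, intervalIntegral.integral_const_mul, smul_eq_mul,
          mul_comm]
    _ ≤ ∫ y in a..b, (u' y ^ 2 - (lam / c y - μ ^ 2) * u y ^ 2) :=
        intervalIntegral.integral_mono_ae_restrict hab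
          (intervalIntegrable_const.sub (hint.const_mul _))
          ((hPC.intervalIntegrable_sq_sub hcm hE).mono_set hsub') hae
    _ = u b * u' b - u a * u' a := hPC.integral_sq_sub_eq hcm hE ha hab hb
    _ ≤ _ := by linarith [le_abs_self (u b * u' b), neg_abs_le (u a * u' a)]

theorem le_integral_sq_div (hPC : PiecewiseConstCoeff H c_m c_M V N p v c) (hε : 0 < ε)
    (hcm : 0 < c_m) (hlam₀ : 0 < lam) (hlam : (c_M + ε) * μ ^ 2 ≤ lam)
    (hE : ReducedEigenfunction H c μ lam u u') (hnorm : ∫ y in (0:ℝ)..H, u y ^ 2 / c y = 1)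
    {a b : ℝ} (ha : 0 ≤ a) (hab : a < b) (hb : b ≤ H)
    (hlam_large : c_m * (2 * exp (c_M * (c_M + ε) / (ε * c_m ^ 2) * V) ^ 2 /
      (ε / (c_M * (c_M + ε)) * c_m * (b - a))) ^ 2 < lam) :
    ε / (c_M * (c_M + ε)) * c_m * (b - a) /
      (4 * H * exp (c_M * (c_M + ε) / (ε * c_m ^ 2) * V) ^ 2) ≤ ∫ y in a..b, u y ^ 2 / c y := by
  have hcM : 0 < c_M := hcm.trans_le ((hPC.value_mem_Icc (Nat.zero_le N)).1.trans
    (hPC.value_mem_Icc (Nat.zero_le N)).2)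
  have hba : 0 < b - a := sub_pos.2 hab
  have hH : 0 < H := (ha.trans_lt hab).trans_le hb
  have hest := hPC.sub_mul_integral_sq_div_le hε hcm hlam₀ hlam hE ha hab.le hb
  have hF₀ := hPC.le_layerEnergy hε hcm hlam₀ hlam hE hnorm (Nat.zero_le N)
  have hF₀' := layerEnergy_nonneg (u := u) (u' := u') (y := p 0)
    (hPC.div_sub_sq_pos hε hcm hlam₀ hlam (Nat.zero_le N))
  set E := exp (c_M * (c_M + ε) / (ε * c_m ^ 2) * V)
  set κ := ε / (c_M * (c_M + ε))
  set F₀ := layerEnergy lam μ (v 0) u u' (p 0)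
  set r := √(lam / c_m)
  have hE₀ : 0 < E := exp_pos _
  have hκ : 0 < κ := by positivity
  have hr : 2 * E ^ 2 ≤ r * (κ * c_m * (b - a)) := by
    rw [← div_le_iff₀ (by positivity), le_sqrt (by positivity) (by positivity), le_div_iff₀ hcm]
    linarith
  have hlam_r : lam = c_m * r ^ 2 := by
    rw [sq_sqrt (by positivity)]
    field_simp
  have hboundary : r * (F₀ * E) ≤ κ * lam * (F₀ / E) * (b - a) / 2 := by
    have h : κ * lam * (F₀ / E) * (b - a) / 2 - r * (F₀ * E) =
        r * F₀ / (2 * E) * (r * (κ * c_m * (b - a)) - 2 * E ^ 2) := by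
      rw [hlam_r]
      field_simp
    nlinarith [mul_nonneg (by positivity : 0 ≤ r * F₀ / (2 * E)) (sub_nonneg.2 hr)]
  have hI : κ * (b - a) * F₀ / (4 * E) ≤ ∫ y in a..b, u y ^ 2 / c y := by
    refine le_of_mul_le_mul_left ?_ hlam₀
    have h : lam * (κ * (b - a) * F₀ / (4 * E)) = κ * lam * (F₀ / E) * (b - a) / 4 := by
      field_simp
    linarith
  calc κ * c_m * (b - a) / (4 * H * E ^ 2) = κ * (b - a) * (c_m / (H * E)) / (4 * E) := by
        field_simp
    _ ≤ κ * (b - a) * F₀ / (4 * E) := by gcongr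
    _ ≤ _ := hI

end PiecewiseConstCoeff

theorem stmt12_general
    (ε H c_m c_M μ₁ V : ℝ)
    (hε : 0 < ε) (hH : 0 < H) (hcm : 0 < c_m) (hcmM : c_m ≤ c_M)
    (hμ₁ : 0 < μ₁) :
    (∃ δ : ℝ, 0 < δ ∧
      ∀ (N : ℕ) (p v : ℕ → ℝ) (c u u' : ℝ → ℝ) (μ lam : ℝ),
        PiecewiseConstCoeff H c_m c_M V N p v c →
        μ₁ ≤ μ → (c_M + ε) * μ ^ 2 ≤ lam →
        ReducedEigenfunction H c μ lam u u' →
        (∫ y in (0:ℝ)..H, (u y) ^ 2 / c y) = 1 →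
        ∀ y ∈ Set.Icc (0:ℝ) H, δ ^ 2 ≤ (u y) ^ 2 + (u' y) ^ 2)
    ∧
    (∀ a b : ℝ, 0 ≤ a → a < b → b ≤ H →
      ∃ d : ℝ, 0 < d ∧ ∃ lam₀ : ℝ, 0 < lam₀ ∧
        ∀ (N : ℕ) (p v : ℕ → ℝ) (c u u' : ℝ → ℝ) (μ lam : ℝ),
          PiecewiseConstCoeff H c_m c_M V N p v c →
          μ₁ ≤ μ → (c_M + ε) * μ ^ 2 ≤ lam → lam₀ < lam →
          ReducedEigenfunction H c μ lam u u' →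
          (∫ y in (0:ℝ)..H, (u y) ^ 2 / c y) = 1 →
          d ≤ ∫ y in a..b, (u y) ^ 2 / c y) := by
  have hcM : 0 < c_M := hcm.trans_le hcmM
  set E := exp (c_M * (c_M + ε) / (ε * c_m ^ 2) * V)
  set κ := ε / (c_M * (c_M + ε))
  refine ⟨⟨√(min 1 (ε * μ₁ ^ 2 / c_M) * (c_m / (H * E))), by positivity, ?_⟩, ?_⟩
  · intro N p v c u u' μ lam hPC hμ hlam hE hnorm y hy
    rw [sq_sqrt (by positivity)]
    exact hPC.le_sq_add_sq hε hcm hμ₁ hμ hlam hE hnorm hy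
  · intro a b ha hab hb
    have hba : 0 < b - a := sub_pos.2 hab
    refine ⟨κ * c_m * (b - a) / (4 * H * E ^ 2), by positivity,
      c_m * (2 * E ^ 2 / (κ * c_m * (b - a))) ^ 2, by positivity, ?_⟩
    intro N p v c u u' μ lam hPC hμ hlam hlam_large hE hnorm
    exact hPC.le_integral_sq_div hε hcm ((by positivity : (0 : ℝ) < _).trans hlam_large) hlam hE
      hnorm ha hab hb hlam_large

theorem stmt12
    (ε H c_m c_M μ₁ V : ℝ)
    (hε : 0 < ε) (hH : 0 < H) (hcm : 0 < c_m) (hcmM : c_m ≤ c_M)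
    (hμ₁ : 0 < μ₁) (hV : 0 < V) :
    (∃ δ : ℝ, 0 < δ ∧
      ∀ (N : ℕ) (p v : ℕ → ℝ) (c u u' : ℝ → ℝ) (μ lam : ℝ),
        PiecewiseConstCoeff H c_m c_M V N p v c →
        μ₁ ≤ μ → (c_M + ε) * μ ^ 2 ≤ lam →
        ReducedEigenfunction H c μ lam u u' →
        (∫ y in (0:ℝ)..H, (u y) ^ 2 / c y) = 1 →
        ∀ y ∈ Set.Icc (0:ℝ) H, δ ^ 2 ≤ (u y) ^ 2 + (u' y) ^ 2)
    ∧
    (∀ a b : ℝ, 0 ≤ a → a < b → b ≤ H →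
      ∃ d : ℝ, 0 < d ∧ ∃ lam₀ : ℝ, 0 < lam₀ ∧
        ∀ (N : ℕ) (p v : ℕ → ℝ) (c u u' : ℝ → ℝ) (μ lam : ℝ),
          PiecewiseConstCoeff H c_m c_M V N p v c →
          μ₁ ≤ μ → (c_M + ε) * μ ^ 2 ≤ lam → lam₀ < lam →
          ReducedEigenfunction H c μ lam u u' →
          (∫ y in (0:ℝ)..H, (u y) ^ 2 / c y) = 1 →
          d ≤ ∫ y in a..b, (u y) ^ 2 / c y) :=
  stmt12_general ε H c_m c_M μ₁ V hε hH hcm hcmM hμ₁
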